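/- For a prime $p$, define $S_j^*(p,a) = \sum_{\substack{m=1 \\ p \nmid m}}^{p} e(am^j/p)$. If $p \nmid a$, then $|S_j^*(p,a)| \leq ((j, p-1) - 1)\sqrt{p} + 1$. -/

import Mathlib

/-!
Let `F` be a finite field with `q` elements and `ψ` a nontrivial additive character of `F`.
For `y ∈ F` the number of `x ∈ Fˣ` with `x ^ j = y` is `∑ χ(y)`, summed over the
`d = gcd(j, q - 1)` multiplicative characters with `χ ^ j = 1`; hence
`∑_{x ∈ Fˣ} ψ(x ^ j) = ∑_{χ ^ j = 1} G(χ, ψ)`. The trivial character gives `G(1, ψ) = -1` and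
each of the other `d - 1` Gauss sums has absolute value `√q`. For `F = ℤ/p` take
`ψ(x) = e(a x / p)`.
-/

open Finset

noncomputable instance {M R : Type*} [CommMonoid M] [Finite M] [CommRing R] [IsDomain R] :
    Fintype (MulChar M R) :=
  .ofFinite _

lemma MulChar.exists_pow_eq_one_apply_ne_one {M R : Type*} [CommMonoid M] [Finite M] [CommRing R]
    [HasEnoughRootsOfUnity R (Monoid.exponent Mˣ)] {j : ℕ} {u : Mˣ} (hu : ∀ x : Mˣ, x ^ j ≠ u) :
    ∃ χ : MulChar M R, χ ^ j = 1 ∧ χ u ≠ 1 := by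
  have hH : u ∉ (powMonoidHom j : Mˣ →* Mˣ).range := by simpa using hu
  rw [← CommGroup.forall_monoidHom_apply_eq_one_iff R] at hH
  push Not at hH
  obtain ⟨φ, hφ, hφu⟩ := hH
  refine ⟨MulChar.ofUnitHom φ, MulChar.ext fun x ↦ ?_, ?_⟩
  · rw [MulChar.pow_apply_coe, MulChar.ofUnitHom_coe, ← Units.val_pow_eq_pow_val, ← map_pow,
      hφ (x ^ j) ⟨x, rfl⟩, Units.val_one, MulChar.one_apply_coe]
  · rwa [MulChar.ofUnitHom_coe, Ne, Units.val_eq_one]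

section FiniteField

open scoped Classical

variable {F : Type*} [Field F] [Fintype F]

lemma norm_gaussSum_eq_sqrt_card {χ : MulChar F ℂ} (hχ : χ ≠ 1) {ψ : AddChar F ℂ}
    (hψ : ψ.IsPrimitive) : ‖gaussSum χ ψ‖ = √(Fintype.card F) := by
  have h := gaussSum_mul_gaussSum_eq_card hχ hψ
  rw [← star_gaussSum_eq, ← starRingEnd_apply, Complex.mul_conj'] at h
  rw [← Real.sqrt_sq (norm_nonneg _)]
  exact congrArg Real.sqrt (mod_cast h)

variable [DecidableEq F]

lemma card_units_pow_eq_one (j : ℕ) :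
    #{u : Fˣ | u ^ j = 1} = Nat.gcd j (Fintype.card F - 1) := by
  rw [← Fintype.card_units, ← Nat.card_eq_fintype_card, Nat.gcd_comm,
    ← IsCyclic.card_powMonoidHom_ker, ← Nat.card_eq_finsetCard]
  congr
  ext
  simp

section CharacterSums

variable {R : Type*} [CommRing R] [IsDomain R] [HasEnoughRootsOfUnity R (Monoid.exponent Fˣ)]

lemma card_mulChar_pow_eq_one (j : ℕ) :
    #{χ : MulChar F R | χ ^ j = 1} = Nat.gcd j (Fintype.card F - 1) := by
  obtain ⟨e⟩ := MulChar.mulEquiv_units F R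
  rw [← card_units_pow_eq_one]
  exact card_equiv e.toEquiv (by simp [← map_pow, e.map_eq_one_iff])

lemma sum_mulChar_pow_eq_one_apply_units (j : ℕ) (u : Fˣ) :
    ∑ χ : MulChar F R with χ ^ j = 1, χ u = #{x : Fˣ | x ^ j = u} := by
  by_cases hu : ∃ x : Fˣ, x ^ j = u
  · obtain ⟨x₀, rfl⟩ := hu
    have hfiber : #{x : Fˣ | x ^ j = x₀ ^ j} = #{x : Fˣ | x ^ j = 1} :=
      MonoidHom.card_fiber_eq_of_mem_range (powMonoidHom j) ⟨x₀, rfl⟩ ⟨1, one_pow j⟩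
    calc ∑ χ : MulChar F R with χ ^ j = 1, χ ↑(x₀ ^ j)
        = ∑ χ : MulChar F R with χ ^ j = 1, 1 := sum_congr rfl fun χ hχ ↦ by
          rw [Units.val_pow_eq_pow_val, map_pow, ← MulChar.pow_apply_coe, (mem_filter.mp hχ).2,
            MulChar.one_apply_coe]
      _ = #{x : Fˣ | x ^ j = x₀ ^ j} := by
          rw [sum_const, nsmul_one, card_mulChar_pow_eq_one, hfiber, card_units_pow_eq_one]
  · push Not at hu
    obtain ⟨χ₀, hχ₀, hχ₀u⟩ := MulChar.exists_pow_eq_one_apply_ne_one (R := R) hu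
    rw [show #{x : Fˣ | x ^ j = u} = 0 by simp [hu], Nat.cast_zero]
    -- multiplication by `χ₀` permutes the characters with `χ ^ j = 1`
    refine eq_zero_of_mul_eq_self_left hχ₀u ?_
    rw [mul_sum]
    exact sum_nbij' (χ₀ * ·) (χ₀⁻¹ * ·) (by simp [mul_pow, hχ₀]) (by simp [mul_pow, hχ₀])
      (by simp) (by simp) (by simp)

lemma sum_mulChar_pow_eq_one_apply (j : ℕ) (y : F) :
    ∑ χ : MulChar F R with χ ^ j = 1, χ y = #{x : Fˣ | (x : F) ^ j = y} := by
  rcases eq_or_ne y 0 with rfl | hy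
  · simp only [MulChar.map_zero, sum_const_zero]
    simp
  · lift y to Fˣ using hy.isUnit
    simp_rw [← Units.val_pow_eq_pow_val, Units.val_inj]
    exact sum_mulChar_pow_eq_one_apply_units j y

lemma sum_addChar_units_pow_eq_sum_gaussSum (ψ : AddChar F R) (j : ℕ) :
    ∑ x : Fˣ, ψ (x ^ j) = ∑ χ : MulChar F R with χ ^ j = 1, gaussSum χ ψ := by
  calc ∑ x : Fˣ, ψ (x ^ j) = ∑ y : F, ∑ x : Fˣ with x.val ^ j = y, ψ (x ^ j) :=
        (sum_fiberwise univ (fun x : Fˣ ↦ (x : F) ^ j) fun x ↦ ψ (x ^ j)).symm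
    _ = ∑ y : F, (∑ χ : MulChar F R with χ ^ j = 1, χ y) * ψ y := by
        refine sum_congr rfl fun y _ ↦ ?_
        rw [sum_mulChar_pow_eq_one_apply, ← nsmul_eq_mul, ← sum_const]
        exact sum_congr rfl fun x hx ↦ by rw [(mem_filter.mp hx).2]
    _ = _ := by simp only [gaussSum, sum_mul, sum_comm (γ := F)]

end CharacterSums

theorem norm_sum_addChar_units_pow_le {ψ : AddChar F ℂ} (hψ : ψ ≠ 1) (j : ℕ) :
    ‖∑ x : Fˣ, ψ (x ^ j)‖
      ≤ ((Nat.gcd j (Fintype.card F - 1) : ℝ) - 1) * √(Fintype.card F) + 1 := by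
  have h1 : (1 : MulChar F ℂ) ∈ ({χ | χ ^ j = 1} : Finset (MulChar F ℂ)) := by simp
  rw [sum_addChar_units_pow_eq_sum_gaussSum ψ j, ← add_sum_erase _ _ h1,
    ← card_mulChar_pow_eq_one (R := ℂ), ← card_erase_add_one h1, Nat.cast_add_one,
    add_sub_cancel_right]
  calc _ ≤ ‖gaussSum (1 : MulChar F ℂ) ψ‖ + ∑ χ ∈ _, ‖gaussSum χ ψ‖ :=
        norm_add_le_of_le le_rfl (norm_sum_le _ _)
    _ = _ := by
        rw [gaussSum_one_left hψ, norm_neg, norm_one, add_comm, ← nsmul_eq_mul, ← sum_const]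
        congr 1
        exact sum_congr rfl fun χ hχ ↦
          norm_gaussSum_eq_sqrt_card (ne_of_mem_erase hχ) (.of_ne_one hψ)

end FiniteField

lemma sum_exp_eq_sum_units_stdAddChar (p : ℕ) [Fact p.Prime] (j : ℕ) (a : ℤ) :
    ∑ m ∈ (Finset.Icc 1 p).filter (fun m => ¬ p ∣ m),
        Complex.exp (2 * Real.pi * Complex.I * (a * m ^ j / p))
      = ∑ x : (ZMod p)ˣ, (ZMod.stdAddChar.mulShift (a : ZMod p)) (x ^ j) := by
  have hmem {m : ℕ} : m ∈ (Icc 1 p).filter (fun m => ¬ p ∣ m) ↔ (m : ZMod p) ≠ 0 ∧ m < p := by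
    rw [Ne, ZMod.natCast_eq_zero_iff, mem_filter, mem_Icc]
    constructor
    · rintro ⟨⟨h1, h2⟩, h3⟩
      exact ⟨h3, h2.lt_of_ne (by rintro rfl; exact h3 dvd_rfl)⟩
    · rintro ⟨h1, h2⟩
      exact ⟨⟨Nat.pos_of_ne_zero (by rintro rfl; exact h1 (dvd_zero p)), h2.le⟩, h1⟩
  refine sum_bij' (fun m hm ↦ Units.mk0 (m : ZMod p) (hmem.mp hm).1) (fun x _ ↦ (x : ZMod p).val)
    (fun _ _ ↦ mem_univ _) (fun x _ ↦ hmem.mpr ⟨by simp, ZMod.val_lt _⟩)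
    (fun m hm ↦ ZMod.val_cast_of_lt (hmem.mp hm).2) (fun x _ ↦ by ext; simp) fun m _ ↦ ?_
  have hcast : (a : ZMod p) * (m : ZMod p) ^ j = ((a * m ^ j : ℤ) : ZMod p) := by push_cast; rfl
  rw [AddChar.mulShift_apply, Units.val_mk0, hcast, ZMod.stdAddChar_coe]
  push_cast
  ring_nf

theorem stmt_7_general (p : ℕ) (hp : p.Prime) (j : ℕ) (a : ℤ) (ha : ¬ (p : ℤ) ∣ a) :
    ‖∑ m ∈ (Finset.Icc 1 p).filter (fun m => ¬ p ∣ m),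
        Complex.exp (2 * Real.pi * Complex.I * (a * m ^ j / p))‖
      ≤ ((Nat.gcd j (p - 1) : ℝ) - 1) * Real.sqrt p + 1 := by
  have : Fact p.Prime := ⟨hp⟩
  have hψ : ZMod.stdAddChar.mulShift (a : ZMod p) ≠ 1 :=
    ZMod.isPrimitive_stdAddChar p (by rwa [Ne, ZMod.intCast_zmod_eq_zero_iff_dvd])
  rw [sum_exp_eq_sum_units_stdAddChar]
  simpa only [ZMod.card] using norm_sum_addChar_units_pow_le hψ j

theorem stmt_7 (p : ℕ) (hp : p.Prime) (j : ℕ) (hj : 1 ≤ j) (a : ℤ) (ha : ¬ (p : ℤ) ∣ a) :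
    ‖∑ m ∈ (Finset.Icc 1 p).filter (fun m => ¬ p ∣ m),
        Complex.exp (2 * Real.pi * Complex.I * (a * m ^ j / p))‖
      ≤ ((Nat.gcd j (p - 1) : ℝ) - 1) * Real.sqrt p + 1 :=
  stmt_7_general p hp j a ha
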